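/- Let k be a field and λ ∈ k with λ ≠ 0 and λ ≠ 1, and let R = k[x,y]/(F) where F = x(x−y²)(x−λy²). The cokernel of the map of free R-modules R⁶ → R⁶ given by the matrix Q_a(2) (the 6×6 matrix with rows (z,0,0,0,0,0), (0,xz,0,0,0,0), (0,0,xz,0,0,0), (−xy,0,0,xz',0,0), (0,−xy,0,0,xz',0), (0,0,−xy,0,0,xz'), where z = x−y², z' = x−λy²) is the R-module generated by six generators u², u₁¹², u₂¹², v₁, v₂, v₃ subject exactly to the relations z·u² = 0, xz·u₁¹² = 0, xz·u₂¹² = 0, xz'·v₁ − xy·u² = 0, xz'·v₂ − xy·u₁¹² = 0, xz'·v₃ − xy·u₂¹² = 0; in particular this module is annihilated by F and is a torsion-free R-module. -/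

import Mathlib

open MvPolynomial

noncomputable section

namespace T36

variable {k : Type} [Field k]

/-- `F = x (x - y²)(x - λ y²)` with `x = X 0`, `y = X 1`. -/
def F (lam : k) : MvPolynomial (Fin 2) k :=
  X 0 * (X 0 - X 1 ^ 2) * (X 0 - C lam * X 1 ^ 2)

/-- `R = k[x,y]/(F)`, the coordinate ring of the `T₃₆` singularity. -/
def R (k : Type) [Field k] (lam : k) : Type :=
  MvPolynomial (Fin 2) k ⧸ Ideal.span {F lam}

instance (k : Type) [Field k] (lam : k) : CommRing (R k lam) :=
  inferInstanceAs (CommRing (MvPolynomial (Fin 2) k ⧸ Ideal.span {F lam}))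

/-- The residue class in `R` of a polynomial. -/
def cls (lam : k) (g : MvPolynomial (Fin 2) k) : R k lam :=
  Ideal.Quotient.mk (Ideal.span {F lam}) g

/-- The class of `x` in `R`. -/
def xq (lam : k) : R k lam := cls lam (X 0)
/-- The class of `y` in `R`. -/
def yq (lam : k) : R k lam := cls lam (X 1)
/-- The class of `z = x - y²` in `R`. -/
def zq (lam : k) : R k lam := cls lam (X 0 - X 1 ^ 2)
/-- The class of `z' = x - λ y²` in `R`. -/
def z'q (lam : k) : R k lam := cls lam (X 0 - C lam * X 1 ^ 2)

/-- The matrix `Q_a(2)` over `R`. -/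
def Qa2R (lam : k) : Matrix (Fin 6) (Fin 6) (R k lam) :=
  !![zq lam, 0, 0, 0, 0, 0;
     0, xq lam * zq lam, 0, 0, 0, 0;
     0, 0, xq lam * zq lam, 0, 0, 0;
     -(xq lam * yq lam), 0, 0, xq lam * z'q lam, 0, 0;
     0, -(xq lam * yq lam), 0, 0, xq lam * z'q lam, 0;
     0, 0, -(xq lam * yq lam), 0, 0, xq lam * z'q lam]

end T36

/-!
Up to reordering the coordinates as `(0, 3), (1, 4), (2, 5)`, `Q_a(2)` is block diagonal with
lower triangular blocks with rows `(a, 0)` and `(-xy, xz')`, where `a = z` or `a = xz`; the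
relations are just its rows. For torsion-freeness, a nonzerodivisor `r` of `R` lifts to a
polynomial with no common factor with `F`, and in the factorial ring `k[x,y]` it can be cancelled
from `r v ≡ c₀ (a, 0) + c₁ (-xy, xz') (mod F)` one block at a time: first `v₁ = u xz'`, then
`z ∣ r u - c₁`, and since `a ∣ F` and `a ∣ z xy`, finally `a ∣ v₀ + u xy`.
-/

theorem Submodule.torsion_quotient_eq_bot {R M : Type*} [CommRing R] [AddCommGroup M]
    [Module R M] (N : Submodule R M)
    (hN : ∀ r ∈ nonZeroDivisors R, ∀ v : M, r • v ∈ N → v ∈ N) :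
    torsion R (M ⧸ N) = ⊥ := by
  refine eq_bot_iff.mpr fun m ⟨r, hr⟩ => ?_
  obtain ⟨v, rfl⟩ := Quotient.mk_surjective N m
  rw [← Quotient.mk_smul, Quotient.mk_eq_zero] at hr
  rw [mem_bot, Quotient.mk_eq_zero]
  exact hN r r.2 v hr

theorem Submodule.span_range_mk_single_eq_top {R ι : Type*} [CommRing R] [Finite ι]
    [DecidableEq ι] (N : Submodule R (ι → R)) :
    span R (Set.range fun i => (Quotient.mk (Pi.single i 1) : _ ⧸ N)) = ⊤ := by
  rw [show (Set.range fun i => (Quotient.mk (Pi.single i 1) : _ ⧸ N)) =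
      N.mkQ '' Set.range (Pi.basisFun R ι) by rw [← Set.range_comp]; ext; simp,
    span_image, (Pi.basisFun R ι).span_eq, map_top, range_mkQ]

section Saturation

variable {S : Type*} [CommRing S] [IsDomain S] {F : S}

theorem isRelPrime_of_mk_mem_nonZeroDivisors (hF : F ≠ 0) {r : S}
    (hr : Ideal.Quotient.mk (Ideal.span {F}) r ∈ nonZeroDivisors (S ⧸ Ideal.span {F})) :
    IsRelPrime r F := by
  rintro p ⟨q, rfl⟩ ⟨g, rfl⟩
  have hg : Ideal.Quotient.mk (Ideal.span {p * g}) g = 0 :=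
    (mem_nonZeroDivisors_iff.mp hr).2 _ <| by
      rw [← map_mul, Ideal.Quotient.eq_zero_iff_mem, Ideal.mem_span_singleton]
      exact ⟨q, by ring⟩
  obtain ⟨t, ht⟩ := Ideal.mem_span_singleton.mp (Ideal.Quotient.eq_zero_iff_mem.mp hg)
  exact IsUnit.of_mul_eq_one t <|
    mul_left_cancel₀ (right_ne_zero_of_mul hF) (by linear_combination -ht)

theorem exists_triangular_coeffs_of_nonZeroDivisor_mul [DecompositionMonoid S] {a b d g : S}
    (hF : F = d * g) (hF0 : F ≠ 0) (haF : a ∣ F) (hagb : a ∣ g * b)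
    {r v₀ v₁ c₀ c₁ : S ⧸ Ideal.span {F}} (hr : r ∈ nonZeroDivisors _)
    (h₀ : r * v₀ = c₀ * Ideal.Quotient.mk _ a - c₁ * Ideal.Quotient.mk _ b)
    (h₁ : r * v₁ = c₁ * Ideal.Quotient.mk _ d) :
    ∃ s u, v₀ = s * Ideal.Quotient.mk _ a - u * Ideal.Quotient.mk _ b ∧
      v₁ = u * Ideal.Quotient.mk _ d := by
  obtain ⟨r, rfl⟩ := Ideal.Quotient.mk_surjective r
  obtain ⟨v₀, rfl⟩ := Ideal.Quotient.mk_surjective v₀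
  obtain ⟨v₁, rfl⟩ := Ideal.Quotient.mk_surjective v₁
  obtain ⟨c₀, rfl⟩ := Ideal.Quotient.mk_surjective c₀
  obtain ⟨c₁, rfl⟩ := Ideal.Quotient.mk_surjective c₁
  have hrF := isRelPrime_of_mk_mem_nonZeroDivisors hF0 hr
  simp only [← map_mul, ← map_sub, Ideal.Quotient.eq, Ideal.mem_span_singleton] at h₀ h₁
  obtain ⟨t₁, ht₁⟩ := h₁
  obtain ⟨u, rfl⟩ : d ∣ v₁ := (hrF.of_dvd_right ⟨g, hF⟩).symm.dvd_of_dvd_mul_left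
    ⟨c₁ + g * t₁, by linear_combination ht₁ + t₁ * hF⟩
  have hd0 : d ≠ 0 := left_ne_zero_of_mul (hF ▸ hF0)
  have hgu : g ∣ r * u - c₁ :=
    ⟨t₁, mul_left_cancel₀ hd0 (by linear_combination ht₁ + t₁ * hF)⟩
  obtain ⟨s, hs⟩ : a ∣ v₀ + u * b := by
    refine (hrF.of_dvd_right haF).symm.dvd_of_dvd_mul_left ?_
    rw [show r * (v₀ + u * b) = (r * v₀ - (c₀ * a - c₁ * b)) + (r * u - c₁) * b + c₀ * a by
      ring]
    exact dvd_add (dvd_add (haF.trans h₀) (hagb.trans (mul_dvd_mul_right hgu b)))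
      (dvd_mul_left a c₀)
  refine ⟨Ideal.Quotient.mk _ s, Ideal.Quotient.mk _ u, ?_, by rw [map_mul, mul_comm]⟩
  rw [← map_mul, ← map_mul, ← map_sub, show v₀ = s * a - u * b by linear_combination hs]

end Saturation

namespace T36

open Matrix

variable {k : Type} [Field k] (lam : k)

theorem F_ne_zero : F lam ≠ 0 := fun h => by
  simpa [F] using congrArg (eval ![1, 0]) h

theorem cls_F : cls lam (F lam) = 0 :=
  Ideal.Quotient.eq_zero_iff_mem.mpr (Ideal.mem_span_singleton_self _)

theorem cls_mul (a b : MvPolynomial (Fin 2) k) : cls lam (a * b) = cls lam a * cls lam b :=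
  map_mul _ a b

theorem vecMul_Qa2R (c : Fin 6 → R k lam) :
    c ᵥ* Qa2R lam =
      ![c 0 * cls lam (X 0 - X 1 ^ 2) - c 3 * cls lam (X 0 * X 1),
        c 1 * cls lam (X 0 * (X 0 - X 1 ^ 2)) - c 4 * cls lam (X 0 * X 1),
        c 2 * cls lam (X 0 * (X 0 - X 1 ^ 2)) - c 5 * cls lam (X 0 * X 1),
        c 3 * cls lam (X 0 * (X 0 - C lam * X 1 ^ 2)),
        c 4 * cls lam (X 0 * (X 0 - C lam * X 1 ^ 2)),
        c 5 * cls lam (X 0 * (X 0 - C lam * X 1 ^ 2))] := by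
  ext j
  fin_cases j <;>
    simp [vecMul, dotProduct, Fin.sum_univ_succ, Qa2R, xq, yq, zq, z'q, cls_mul] <;> ring

theorem range_row_Qa2R :
    Set.range (Qa2R lam).row =
      {![zq lam, 0, 0, 0, 0, 0],
        ![0, xq lam * zq lam, 0, 0, 0, 0],
        ![0, 0, xq lam * zq lam, 0, 0, 0],
        ![-(xq lam * yq lam), 0, 0, xq lam * z'q lam, 0, 0],
        ![0, -(xq lam * yq lam), 0, 0, xq lam * z'q lam, 0],
        ![0, 0, -(xq lam * yq lam), 0, 0, xq lam * z'q lam]} := by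
  ext w
  change (∃ i, Qa2R lam i = w) ↔ _
  simp only [Fin.exists_fin_succ, IsEmpty.exists_iff, or_false, Set.mem_insert_iff,
    Set.mem_singleton_iff, eq_comm]
  rfl

theorem mem_range_Qa2R_of_smul_mem {r : R k lam} (hr : r ∈ nonZeroDivisors (R k lam))
    {v : Fin 6 → R k lam} (hv : r • v ∈ LinearMap.range (Qa2R lam).vecMulLinear) :
    v ∈ LinearMap.range (Qa2R lam).vecMulLinear := by
  obtain ⟨c, hc⟩ := hv
  rw [vecMulLinear_apply, vecMul_Qa2R] at hc
  have hF : F lam = X 0 * (X 0 - C lam * X 1 ^ 2) * (X 0 - X 1 ^ 2) := by rw [F]; ring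
  have hz : X 0 - X 1 ^ 2 ∣ F lam := ⟨X 0 * (X 0 - C lam * X 1 ^ 2), by rw [hF]; ring⟩
  have hxz : X 0 * (X 0 - X 1 ^ 2) ∣ F lam := ⟨X 0 - C lam * X 1 ^ 2, by rw [hF]; ring⟩
  have hxz_zxy : (X 0 * (X 0 - X 1 ^ 2) : MvPolynomial (Fin 2) k) ∣
      (X 0 - X 1 ^ 2) * (X 0 * X 1) := ⟨X 1, by ring⟩
  obtain ⟨s₀, u₀, h₀, h₃⟩ := exists_triangular_coeffs_of_nonZeroDivisor_mul (F := F lam) hF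
    (F_ne_zero lam) hz (dvd_mul_right _ _) hr (congrFun hc 0).symm (congrFun hc 3).symm
  obtain ⟨s₁, u₁, h₁, h₄⟩ := exists_triangular_coeffs_of_nonZeroDivisor_mul (F := F lam) hF
    (F_ne_zero lam) hxz hxz_zxy hr (congrFun hc 1).symm (congrFun hc 4).symm
  obtain ⟨s₂, u₂, h₂, h₅⟩ := exists_triangular_coeffs_of_nonZeroDivisor_mul (F := F lam) hF
    (F_ne_zero lam) hxz hxz_zxy hr (congrFun hc 2).symm (congrFun hc 5).symm
  refine ⟨![s₀, s₁, s₂, u₀, u₁, u₂], ?_⟩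
  rw [vecMulLinear_apply, vecMul_Qa2R]
  ext j
  fin_cases j
  exacts [h₀.symm, h₁.symm, h₂.symm, h₃.symm, h₄.symm, h₅.symm]

end T36

theorem T36_Qa2_cokernel_general (k : Type) [Field k] (lam : k) :
    -- generators: the images of the six standard basis vectors generate the cokernel
    (Submodule.span (T36.R k lam)
        (Set.range fun i : Fin 6 =>
          (Submodule.Quotient.mk (Pi.single i (1 : T36.R k lam)) :
            (Fin 6 → T36.R k lam) ⧸ LinearMap.range (T36.Qa2R lam).vecMulLinear)) = ⊤) ∧
    -- relations: a vector of coefficients yields the zero element of the cokernel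
    -- if and only if it is an `R`-linear combination of the six listed relations
    (∀ v : Fin 6 → T36.R k lam,
      (Submodule.Quotient.mk v :
          (Fin 6 → T36.R k lam) ⧸ LinearMap.range (T36.Qa2R lam).vecMulLinear) = 0 ↔
        v ∈ Submodule.span (T36.R k lam)
          ({![T36.zq lam, 0, 0, 0, 0, 0],
            ![0, T36.xq lam * T36.zq lam, 0, 0, 0, 0],
            ![0, 0, T36.xq lam * T36.zq lam, 0, 0, 0],
            ![-(T36.xq lam * T36.yq lam), 0, 0, T36.xq lam * T36.z'q lam, 0, 0],
            ![0, -(T36.xq lam * T36.yq lam), 0, 0, T36.xq lam * T36.z'q lam, 0],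
            ![0, 0, -(T36.xq lam * T36.yq lam), 0, 0, T36.xq lam * T36.z'q lam]} :
            Set (Fin 6 → T36.R k lam))) ∧
    -- the cokernel is annihilated by `F`
    (∀ m : (Fin 6 → T36.R k lam) ⧸ LinearMap.range (T36.Qa2R lam).vecMulLinear,
      T36.cls lam (T36.F lam) • m = 0) ∧
    -- the cokernel is a torsion-free `R`-module
    (Submodule.torsion (T36.R k lam)
        ((Fin 6 → T36.R k lam) ⧸ LinearMap.range (T36.Qa2R lam).vecMulLinear) = ⊥) := by
  refine ⟨Submodule.span_range_mk_single_eq_top _, fun v => ?_,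
    fun m => by rw [T36.cls_F, zero_smul],
    Submodule.torsion_quotient_eq_bot _ fun r hr v => T36.mem_range_Qa2R_of_smul_mem lam hr⟩
  rw [Submodule.Quotient.mk_eq_zero, range_vecMulLinear, T36.range_row_Qa2R]

/-- The cokernel of the map `R⁶ → R⁶` given by the matrix `Q_a(2)` (i.e. the quotient
of the free module `R⁶` by the submodule spanned by the rows of `Q_a(2)`) is the
`R`-module with six generators `u², u₁¹², u₂¹², v₁, v₂, v₃` (the images of the
standard basis vectors) subject exactly to the relations
`z u² = 0`, `xz u₁¹² = 0`, `xz u₂¹² = 0`, `xz' v₁ − xy u² = 0`,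
`xz' v₂ − xy u₁¹² = 0`, `xz' v₃ − xy u₂¹² = 0`; it is annihilated by `F` and is a
torsion‑free `R`-module. -/
theorem T36_Qa2_cokernel (k : Type) [Field k] (lam : k) (h0 : lam ≠ 0) (h1 : lam ≠ 1) :
    -- generators: the images of the six standard basis vectors generate the cokernel
    (Submodule.span (T36.R k lam)
        (Set.range fun i : Fin 6 =>
          (Submodule.Quotient.mk (Pi.single i (1 : T36.R k lam)) :
            (Fin 6 → T36.R k lam) ⧸ LinearMap.range (T36.Qa2R lam).vecMulLinear)) = ⊤) ∧
    -- relations: a vector of coefficients yields the zero element of the cokernel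
    -- if and only if it is an `R`-linear combination of the six listed relations
    (∀ v : Fin 6 → T36.R k lam,
      (Submodule.Quotient.mk v :
          (Fin 6 → T36.R k lam) ⧸ LinearMap.range (T36.Qa2R lam).vecMulLinear) = 0 ↔
        v ∈ Submodule.span (T36.R k lam)
          ({![T36.zq lam, 0, 0, 0, 0, 0],
            ![0, T36.xq lam * T36.zq lam, 0, 0, 0, 0],
            ![0, 0, T36.xq lam * T36.zq lam, 0, 0, 0],
            ![-(T36.xq lam * T36.yq lam), 0, 0, T36.xq lam * T36.z'q lam, 0, 0],
            ![0, -(T36.xq lam * T36.yq lam), 0, 0, T36.xq lam * T36.z'q lam, 0],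
            ![0, 0, -(T36.xq lam * T36.yq lam), 0, 0, T36.xq lam * T36.z'q lam]} :
            Set (Fin 6 → T36.R k lam))) ∧
    -- the cokernel is annihilated by `F`
    (∀ m : (Fin 6 → T36.R k lam) ⧸ LinearMap.range (T36.Qa2R lam).vecMulLinear,
      T36.cls lam (T36.F lam) • m = 0) ∧
    -- the cokernel is a torsion-free `R`-module
    (Submodule.torsion (T36.R k lam)
        ((Fin 6 → T36.R k lam) ⧸ LinearMap.range (T36.Qa2R lam).vecMulLinear) = ⊥) :=
  T36_Qa2_cokernel_general k lam
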